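/- Let E be a finite-dimensional real normed vector space, let Ω ⊆ E be nonempty with Ω ≠ E, and let φ_Ω be the signed distance function of Ω. If x ∉ ∂Ω and φ_Ω is differentiable at x, then the derivative Dφ_Ω(x) has operator norm exactly 1. -/

import Mathlib

open Metric Classical

/-- The signed distance function of a set `Ω`: the distance to the frontier of `Ω`,
taken positive inside `Ω` and negative outside. -/
noncomputable def signedDistFrontier {E : Type*} [NormedAddCommGroup E] [NormedSpace ℝ E]
    (Ω : Set E) (p : E) : ℝ :=
  if p ∈ Ω then infDist p (frontier Ω) else -infDist p (frontier Ω)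

/-!
Off the frontier, `signedDistFrontier Ω` agrees near `x` with `±infDist · (frontier Ω)`, so it
suffices to treat the distance `d` to a nonempty closed set `F` at a point `x ∉ F`. Being
`1`-Lipschitz, `d` has derivative of norm at most `1`. Conversely `x` has a nearest point `y ∈ F`
(closed balls are compact), and `d` decreases at unit speed along the segment from `x` to `y`:
`d (x + t • (y - x)) = (1 - t) * d x` for `t ∈ [0, 1]`. Hence `Dd(x) (y - x) = -‖y - x‖`, which
forces `‖Dd(x)‖ ≥ 1`.
-/

open Filter Topology Set AffineMap

section

variable {E : Type*} [NormedAddCommGroup E] [NormedSpace ℝ E] {F : Set E} {x y : E}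

theorem infDist_lineMap_of_infDist_eq_dist (hy : y ∈ F) (hxy : infDist x F = dist x y)
    {t : ℝ} (ht : t ∈ Icc (0 : ℝ) 1) :
    infDist (lineMap x y t) F = (1 - t) * infDist x F := by
  have h_right : dist (lineMap x y t) y = (1 - t) * dist x y := by
    rw [dist_lineMap_right, Real.norm_of_nonneg (sub_nonneg.2 ht.2)]
  have h_left : dist x (lineMap x y t) = t * dist x y := by
    rw [dist_comm, dist_lineMap_left, Real.norm_of_nonneg ht.1]
  have h_le := infDist_le_dist_of_mem (x := lineMap x y t) hy
  have h_ge := infDist_le_infDist_add_dist (x := x) (y := lineMap x y t) (s := F)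
  rw [hxy] at h_ge ⊢
  linarith

theorem HasFDerivAt.apply_sub_eq_neg_of_lineMap {f : E → ℝ} {L : E →L[ℝ] ℝ}
    (hf : HasFDerivAt f L x) (hlin : ∀ t ∈ Icc (0 : ℝ) 1, f (lineMap x y t) = (1 - t) * f x) :
    L (y - x) = -f x := by
  have hf0 : HasFDerivAt f L (lineMap x y (0 : ℝ)) := by rwa [lineMap_apply_zero]
  have h_comp : HasDerivWithinAt (fun t : ℝ => f (lineMap x y t)) (L (y - x)) (Icc 0 1) 0 :=
    (hf0.comp_hasDerivAt 0 hasDerivAt_lineMap).hasDerivWithinAt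
  have h_affine : HasDerivWithinAt (fun t : ℝ => (1 - t) * f x) (-f x) (Icc 0 1) 0 := by
    simpa using ((hasDerivAt_id (0 : ℝ)).const_sub 1).mul_const (f x) |>.hasDerivWithinAt
  have h0 : (0 : ℝ) ∈ Icc (0 : ℝ) 1 := left_mem_Icc.2 zero_le_one
  exact (uniqueDiffOn_Icc zero_lt_one 0 h0).eq_deriv _
    (h_comp.congr_of_mem (fun t ht => (hlin t ht).symm) h0) h_affine

theorem norm_fderiv_infDist_eq_one [ProperSpace E] (hF : IsClosed F) (hFne : F.Nonempty)
    (hx : x ∉ F)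
    (hdiff : DifferentiableAt ℝ (infDist · F) x) :
    ‖fderiv ℝ (infDist · F) x‖ = 1 := by
  set L := fderiv ℝ (infDist · F) x
  have hd : 0 < infDist x F := (hF.notMem_iff_infDist_pos hFne).1 hx
  obtain ⟨y, hy, hxy⟩ := hF.exists_infDist_eq_dist hFne x
  have hLy : L (y - x) = -infDist x F :=
    hdiff.hasFDerivAt.apply_sub_eq_neg_of_lineMap fun t ht =>
      infDist_lineMap_of_infDist_eq_dist hy hxy ht
  refine le_antisymm (by simpa using norm_fderiv_le_of_lipschitz ℝ (lipschitz_infDist_pt F)) ?_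
  have := L.le_opNorm (y - x)
  rw [hLy, norm_neg, Real.norm_of_nonneg hd.le, ← dist_eq_norm', ← hxy] at this
  exact one_le_of_le_mul_right₀ hd this

theorem signedDistFrontier_eventuallyEq {Ω : Set E} (hx : x ∉ frontier Ω) :
    signedDistFrontier Ω =ᶠ[𝓝 x] (infDist · (frontier Ω)) ∨
      signedDistFrontier Ω =ᶠ[𝓝 x] (-infDist · (frontier Ω)) := by
  by_cases hxΩ : x ∈ Ω
  · have hint : x ∈ interior Ω := self_sdiff_frontier Ω ▸ ⟨hxΩ, hx⟩
    refine .inl ?_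
    filter_upwards [isOpen_interior.mem_nhds hint] with p hp
    exact if_pos (interior_subset hp)
  · have hext : x ∈ interior Ωᶜ := self_sdiff_frontier Ωᶜ ▸ ⟨hxΩ, frontier_compl Ω ▸ hx⟩
    refine .inr ?_
    filter_upwards [isOpen_interior.mem_nhds hext] with p hp
    exact if_neg (interior_subset hp)

end

/-- (Eikonal equation) The signed distance function of a nonempty
proper subset `Ω` of a finite-dimensional real normed vector space has derivative of
operator norm exactly `1` at every point of differentiability away from the frontier. -/
theorem norm_fderiv_signedDist_eq_one {E : Type*} [NormedAddCommGroup E] [NormedSpace ℝ E]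
    [FiniteDimensional ℝ E] (Ω : Set E) (hne : Ω.Nonempty) (hproper : Ω ≠ Set.univ)
    (x : E) (hx : x ∉ frontier Ω)
    (hdiff : DifferentiableAt ℝ (signedDistFrontier Ω) x) :
    ‖fderiv ℝ (signedDistFrontier Ω) x‖ = 1 := by
  have hFne : (frontier Ω).Nonempty := nonempty_frontier_iff.2 ⟨hne, hproper⟩
  rcases signedDistFrontier_eventuallyEq hx with h | h
  · rw [h.fderiv_eq]
    exact norm_fderiv_infDist_eq_one isClosed_frontier hFne hx (h.differentiableAt_iff.1 hdiff)
  · rw [h.fderiv_eq, fderiv_fun_neg, norm_neg]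
    exact norm_fderiv_infDist_eq_one isClosed_frontier hFne hx
      (differentiableAt_fun_neg_iff.1 (h.differentiableAt_iff.1 hdiff))
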